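/- arXiv:1304.5479 — 7 statements merged into one kernel-verified Lean document; each statement's English description precedes it below -/
import Mathlib

section
/- Let φ be a CNF formula, let k ≥ 1 be an integer, let z be a variable not occurring in φ, and let φ' = {c ∪ {z} : c ∈ φ}. Then φ contains an unsatisfiable subset consisting of at most k clauses if and only if z is a k-backbone of φ'. -/
/-! Basic definitions: literals, clauses, CNF formulas, satisfaction,
entailment, reducts, (iterative) k-backbones, Horn clauses, hyperpaths,
implication-graph paths for Krom formulas. -/

section LB

variable {V : Type*}

/-- The complement of a literal (a literal is a variable together with a polarity). -/
def LitCompl (l : V × Bool) : V × Bool := (l.1, !l.2)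

/-- A clause is proper: it contains no complementary pair of literals. -/
def ClauseOk (c : Finset (V × Bool)) : Prop := ∀ x : V, ¬((x, true) ∈ c ∧ (x, false) ∈ c)

/-- An assignment satisfies a clause if it makes some literal of it true. -/
def SatClause (τ : V → Bool) (c : Finset (V × Bool)) : Prop := ∃ l ∈ c, τ l.1 = l.2

/-- An assignment satisfies a CNF formula if it satisfies all of its clauses. -/
def SatCNF (τ : V → Bool) (φ : Finset (Finset (V × Bool))) : Prop := ∀ c ∈ φ, SatClause τ c

/-- A CNF formula is satisfiable if some assignment satisfies it. -/
def CNFSatisfiable (φ : Finset (Finset (V × Bool))) : Prop := ∃ τ, SatCNF τ φ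

/-- `φ ⊨ l`: every assignment satisfying `φ` makes the literal `l` true. -/
def EntailsLit (φ : Finset (Finset (V × Bool))) (l : V × Bool) : Prop :=
  ∀ τ : V → Bool, SatCNF τ φ → τ l.1 = l.2

/-- `x` is a `k`-backbone of `φ`: some subset of at most `k` clauses entails `x` or `¬x`. -/
def KBackbone (φ : Finset (Finset (V × Bool))) (k : ℕ) (x : V) : Prop :=
  ∃ ψ ⊆ φ, ψ.card ≤ k ∧ (EntailsLit ψ (x, true) ∨ EntailsLit ψ (x, false))

/-- A Horn clause: at most one positive literal. -/
def IsHornClause (c : Finset (V × Bool)) : Prop := (c.filter (fun l => l.2 = true)).card ≤ 1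

/-- A definite Horn clause: exactly one positive literal. -/
def IsDefHornClause (c : Finset (V × Bool)) : Prop := (c.filter (fun l => l.2 = true)).card = 1

variable [DecidableEq V]

/-- The set of variables occurring in a CNF formula. -/
def cnfVars (φ : Finset (Finset (V × Bool))) : Finset V := φ.sup (fun c => c.image Prod.fst)

/-- The reduct `φ|_l`: delete clauses containing `l`, remove occurrences of the
complement of `l` from the remaining clauses. -/
def Reduct (φ : Finset (Finset (V × Bool))) (l : V × Bool) : Finset (Finset (V × Bool)) :=
  (φ.filter (fun c => l ∉ c)).image (fun c => c.erase (LitCompl l))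

/-- The reduct `φ|_L` with respect to a set `L` of literals. -/
def ReductSet (φ : Finset (Finset (V × Bool))) (L : Finset (V × Bool)) :
    Finset (Finset (V × Bool)) :=
  (φ.filter (fun c => ∀ l ∈ L, l ∉ c)).image (fun c => c.filter (fun m => LitCompl m ∉ L))

/-- `x` is an iterative `k`-backbone of `φ`: either it is a `k`-backbone, or some
`k`-backbone `y` with `φ ⊨ l`, `l ∈ {y, ¬y}`, makes `x` an iterative `k`-backbone
of `φ|_l`. -/
inductive IterKBackbone (k : ℕ) : Finset (Finset (V × Bool)) → V → Prop
  | base {φ : Finset (Finset (V × Bool))} {x : V} :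
      KBackbone φ k x → IterKBackbone k φ x
  | step {φ : Finset (Finset (V × Bool))} {x y : V} (b : Bool) :
      KBackbone φ k y → EntailsLit φ (y, b) →
      IterKBackbone k (Reduct φ (y, b)) x → IterKBackbone k φ x

/-- `IsHyperpath φ' s t`: the (Horn) formula `φ'` is a hyperpath from `s` to `t`:
either `t = s`, or there is a clause `c = {¬x₁, …, ¬xₙ, t} ∈ φ'` such that
`φ' \ {c}` is a hyperpath from `s` to each `xᵢ`. -/
inductive IsHyperpath : Finset (Finset (V × Bool)) → V → V → Prop
  | refl (φ' : Finset (Finset (V × Bool))) (s : V) : IsHyperpath φ' s s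
  | step {φ' : Finset (Finset (V × Bool))} {s t : V} (c : Finset (V × Bool)) :
      c ∈ φ' → (t, true) ∈ c → (∀ l ∈ c, l.2 = true → l = (t, true)) →
      (∀ l ∈ c, l.2 = false → IsHyperpath (φ'.erase c) s l.1) →
      IsHyperpath φ' s t

/-- A directed path in the implication graph of a Krom formula `φ`, recorded as a
list of steps `(p, c, q)`: the edge from literal `p` to literal `q` arising from the
clause `c = {p̄, q} ∈ φ`. -/
inductive ImplPath (φ : Finset (Finset (V × Bool))) :
    (V × Bool) → List ((V × Bool) × Finset (V × Bool) × (V × Bool)) → (V × Bool) → Prop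
  | nil (p : V × Bool) : ImplPath φ p [] p
  | cons {p q r : V × Bool} {c : Finset (V × Bool)}
      {steps : List ((V × Bool) × Finset (V × Bool) × (V × Bool))} :
      c ∈ φ → c = {LitCompl p, q} → ImplPath φ q steps r →
      ImplPath φ p ((p, c, q) :: steps) r

/-- The set of clauses used by a path in the implication graph. -/
def usedClauses (steps : List ((V × Bool) × Finset (V × Bool) × (V × Bool))) :
    Finset (Finset (V × Bool)) :=
  (steps.map (fun st => st.2.1)).toFinset

/-- A path doubly uses a clause if it traverses both of its (distinct) edges. -/
def DoublyUses (steps : List ((V × Bool) × Finset (V × Bool) × (V × Bool)))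
    (c : Finset (V × Bool)) : Prop :=
  ∃ p q : V × Bool, (p, c, q) ∈ steps ∧ (LitCompl q, c, LitCompl p) ∈ steps ∧ p ≠ LitCompl q

end LB
/-- For a CNF formula `φ`, `k ≥ 1`, and a variable `z` not occurring in `φ`,
`φ` has an unsatisfiable subset of at most `k` clauses iff `z` is a `k`-backbone of
`φ' = {c ∪ {z} : c ∈ φ}`. -/
theorem stmt0 {V : Type*} [DecidableEq V] (φ : Finset (Finset (V × Bool)))
    (hok : ∀ c ∈ φ, ClauseOk c) (k : ℕ) (hk : 1 ≤ k) (z : V) (hz : z ∉ cnfVars φ) :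
    (∃ ψ ⊆ φ, ψ.card ≤ k ∧ ¬ CNFSatisfiable ψ) ↔
      KBackbone (φ.image (fun c => insert (z, true) c)) k z := by
  have hzv : ∀ c ∈ φ, ∀ l ∈ c, l.1 ≠ z := by
    intro c hc l hl h
    apply hz
    rw [cnfVars, Finset.mem_sup]
    exact ⟨c, hc, Finset.mem_image.2 ⟨l, hl, h⟩⟩
  constructor
  · rintro ⟨ψ, hψ, hcard, hunsat⟩
    refine ⟨ψ.image (fun c => insert (z, true) c), Finset.image_subset_image hψ,
      le_trans Finset.card_image_le hcard, Or.inl ?_⟩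
    intro τ hτ
    by_contra h
    apply hunsat
    refine ⟨τ, fun c hc => ?_⟩
    obtain ⟨l, hl, hlt⟩ := hτ _ (Finset.mem_image_of_mem _ hc)
    rcases Finset.mem_insert.1 hl with rfl | hl'
    · exact absurd hlt h
    · exact ⟨l, hl', hlt⟩
  · rintro ⟨ψ', hsub, hcard, hent⟩
    have hall : ∀ d ∈ ψ', (z, true) ∈ d := by
      intro d hd
      obtain ⟨c, _, rfl⟩ := Finset.mem_image.1 (hsub hd)
      exact Finset.mem_insert_self _ _
    cases hent with
    | inr hent =>
      have := hent (fun _ => true) (fun d hd => ⟨(z, true), hall d hd, rfl⟩)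
      simp at this
    | inl hent =>
      refine ⟨φ.filter (fun c => insert (z, true) c ∈ ψ'), Finset.filter_subset _ _,
        le_trans ?_ hcard, ?_⟩
      · apply Finset.card_le_card_of_injOn (fun c => insert (z, true) c)
        · intro c hc
          exact (Finset.mem_filter.1 hc).2
        · intro c hc c' hc' he
          have hc := (Finset.mem_filter.1 hc).1
          have hc' := (Finset.mem_filter.1 hc').1
          have h1 : (z, true) ∉ c := fun h => hzv c hc _ h rfl
          have h2 : (z, true) ∉ c' := fun h => hzv c' hc' _ h rfl
          have := congrArg (Finset.erase · (z, true)) he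
          simpa [Finset.erase_insert, h1, h2] using this
      · rintro ⟨τ, hτ⟩
        set τ' : V → Bool := fun v => if v = z then false else τ v with hτ'
        have hsat : SatCNF τ' ψ' := by
          intro d hd
          obtain ⟨c, hcφ, rfl⟩ := Finset.mem_image.1 (hsub hd)
          have hcf : c ∈ φ.filter (fun c => insert (z, true) c ∈ ψ') :=
            Finset.mem_filter.2 ⟨hcφ, hd⟩
          obtain ⟨l, hl, hlt⟩ := hτ c hcf
          refine ⟨l, Finset.mem_insert_of_mem hl, ?_⟩
          simp only [hτ', if_neg (hzv c hcφ l hl)]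
          exact hlt
        have := hent τ' hsat
        simp [hτ'] at this
end

section
/- Let φ be a CNF formula over a set V of variables, let z ∈ V, and let k ≥ 1 be an integer. For i ∈ {1,2} let φᵢ be a copy of φ obtained by renaming each variable v ∈ V to a fresh variable vᵢ, where the two sets of fresh variables are disjoint, and let ψ = φ₁|_{z₁} ∪ φ₂|_{¬z₂}. Then z is a k-backbone of φ if and only if ψ contains an unsatisfiable subset consisting of at most k clauses. -/
/-- Rename the variables of a CNF formula along a map `f`. -/
def renameCNF {V W : Type*} [DecidableEq V] [DecidableEq W] (f : V → W)
    (φ : Finset (Finset (V × Bool))) : Finset (Finset (W × Bool)) :=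
  φ.image (fun c => c.image (fun l => (f l.1, l.2)))

section Aux

lemma pullback_finset {α β : Type*} [DecidableEq α] [DecidableEq β]
    (s : Finset α) (g : α → β) :
    ∀ t : Finset β, t ⊆ s.image g → ∃ u ⊆ s, u.card ≤ t.card ∧ t ⊆ u.image g := by
  classical
  intro t
  induction t using Finset.induction_on with
  | empty => intro _; exact ⟨∅, by simp⟩
  | @insert a t ha ih =>
    intro h
    obtain ⟨u, hus, hcard, htu⟩ := ih (fun x hx => h (Finset.mem_insert_of_mem hx))
    obtain ⟨b, hb, hba⟩ := Finset.mem_image.mp (h (Finset.mem_insert_self a t))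
    refine ⟨insert b u, Finset.insert_subset hb hus, ?_, ?_⟩
    · calc (insert b u).card ≤ u.card + 1 := Finset.card_insert_le _ _
        _ ≤ t.card + 1 := by omega
        _ = (insert a t).card := (Finset.card_insert_of_notMem ha).symm
    · intro x hx
      rcases Finset.mem_insert.mp hx with rfl | hx
      · exact Finset.mem_image.mpr ⟨b, Finset.mem_insert_self _ _, hba⟩
      · exact Finset.image_subset_image (Finset.subset_insert _ _) (htu hx)

lemma entails_iff_unsat_reduct {V : Type*} [DecidableEq V]
    (ψ : Finset (Finset (V × Bool))) (z : V) (b : Bool) :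
    EntailsLit ψ (z, b) ↔ ¬ CNFSatisfiable (Reduct ψ (z, !b)) := by
  classical
  constructor
  · rintro hE ⟨τ, hτ⟩
    have hsat : SatCNF (Function.update τ z (!b)) ψ := by
      intro c hc
      by_cases hmem : (z, !b) ∈ c
      · exact ⟨(z, !b), hmem, by simp⟩
      · have hcm : c.erase (LitCompl (z, !b)) ∈ Reduct ψ (z, !b) :=
          Finset.mem_image.mpr ⟨c, Finset.mem_filter.mpr ⟨hc, hmem⟩, rfl⟩
        obtain ⟨l, hl, hlv⟩ := hτ _ hcm
        have hlc : l ∈ c := Finset.mem_of_mem_erase hl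
        have hne := Finset.ne_of_mem_erase hl
        have hlz : l.1 ≠ z := by
          intro hz
          have hl2 : l.2 ≠ b := by
            intro h2
            exact hne (by simp [LitCompl, Prod.ext_iff, hz, h2])
          have hl2' : l.2 = !b := by
            cases hb : l.2 <;> cases b <;> simp_all
          exact hmem (by rw [← hz, ← hl2']; exact hlc)
        refine ⟨l, hlc, ?_⟩
        rw [Function.update_of_ne hlz]
        exact hlv
    have := hE _ hsat
    simp at this
  · intro hU τ hτ
    by_contra hzb
    apply hU
    refine ⟨τ, ?_⟩
    intro c' hc'
    obtain ⟨c, hc, rfl⟩ := Finset.mem_image.mp hc'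
    have hcψ := (Finset.mem_filter.mp hc).1
    obtain ⟨l, hl, hlv⟩ := hτ c hcψ
    refine ⟨l, Finset.mem_erase.mpr ⟨?_, hl⟩, hlv⟩
    intro hle
    apply hzb
    rw [hle] at hlv
    simpa [LitCompl] using hlv

lemma entails_rename {V W : Type*} [DecidableEq V] [DecidableEq W] (f : V → W)
    {ψ : Finset (Finset (V × Bool))} {z : V} {b : Bool}
    (h : EntailsLit ψ (z, b)) : EntailsLit (renameCNF f ψ) (f z, b) := by
  intro σ hσ
  have hτ : SatCNF (fun v => σ (f v)) ψ := by
    intro c hc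
    obtain ⟨l, hl, hlv⟩ := hσ (c.image (fun l => (f l.1, l.2)))
      (Finset.mem_image.mpr ⟨c, hc, rfl⟩)
    obtain ⟨m, hm, rfl⟩ := Finset.mem_image.mp hl
    exact ⟨m, hm, hlv⟩
  exact h _ hτ

lemma entails_of_rename {V W : Type*} [DecidableEq V] [DecidableEq W] {f : V → W}
    (hf : Function.Injective f) {ψ : Finset (Finset (V × Bool))} {z : V} {b : Bool}
    (h : EntailsLit (renameCNF f ψ) (f z, b)) : EntailsLit ψ (z, b) := by
  classical
  intro τ hτ
  set σ : W → Bool := fun w => if hw : ∃ v, f v = w then τ hw.choose else true with hσdef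
  have hσf : ∀ v, σ (f v) = τ v := by
    intro v
    have hw : ∃ u, f u = f v := ⟨v, rfl⟩
    have hch : hw.choose = v := hf hw.choose_spec
    simp only [hσdef, dif_pos hw, hch]
  have hσ : SatCNF σ (renameCNF f ψ) := by
    intro c' hc'
    obtain ⟨c, hc, rfl⟩ := Finset.mem_image.mp hc'
    obtain ⟨l, hl, hlv⟩ := hτ c hc
    exact ⟨(f l.1, l.2), Finset.mem_image.mpr ⟨l, hl, rfl⟩, by simp [hσf, hlv]⟩
  have := h σ hσ
  rw [show ((f z, b) : W × Bool).1 = f z from rfl] at this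
  rw [hσf] at this
  exact this

lemma reduct_rename_eq {V W : Type*} [DecidableEq V] [DecidableEq W] (f : V → W)
    (φ : Finset (Finset (V × Bool))) (l : W × Bool) :
    Reduct (renameCNF f φ) l =
      (φ.filter (fun d => l ∉ d.image (fun m => (f m.1, m.2)))).image
        (fun d => (d.image (fun m => (f m.1, m.2))).erase (LitCompl l)) := by
  classical
  unfold Reduct renameCNF
  rw [Finset.filter_image, Finset.image_image]
  rfl

lemma reduct_mono {V : Type*} [DecidableEq V] {ψ φ : Finset (Finset (V × Bool))}
    (h : ψ ⊆ φ) (l : V × Bool) : Reduct ψ l ⊆ Reduct φ l :=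
  Finset.image_subset_image (Finset.filter_subset_filter _ h)

lemma reduct_card_le {V : Type*} [DecidableEq V] (ψ : Finset (Finset (V × Bool)))
    (l : V × Bool) : (Reduct ψ l).card ≤ ψ.card :=
  le_trans Finset.card_image_le (Finset.card_filter_le _ _)

lemma unsat_mono {V : Type*} {t s : Finset (Finset (V × Bool))} (h : t ⊆ s)
    (hu : ¬ CNFSatisfiable t) : ¬ CNFSatisfiable s := by
  rintro ⟨τ, hτ⟩
  exact hu ⟨τ, fun c hc => hτ c (h hc)⟩

lemma reduct_rename_vars {V W : Type*} [DecidableEq V] [DecidableEq W] (f : V → W)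
    (φ : Finset (Finset (V × Bool))) (L : W × Bool) {c : Finset (W × Bool)}
    (hc : c ∈ Reduct (renameCNF f φ) L) {l : W × Bool} (hl : l ∈ c) :
    l.1 ∈ Set.range f := by
  obtain ⟨c', hc', rfl⟩ := Finset.mem_image.mp hc
  have hmem := Finset.mem_of_mem_erase hl
  obtain ⟨d, _, rfl⟩ := Finset.mem_image.mp (Finset.mem_filter.mp hc').1
  obtain ⟨m, _, rfl⟩ := Finset.mem_image.mp hmem
  exact ⟨m.1, rfl⟩

lemma extract_backbone {V W : Type*} [DecidableEq V] [DecidableEq W] {f : V → W}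
    (hf : Function.Injective f) (φ : Finset (Finset (V × Bool))) (z : V) (b : Bool)
    {ψ₁ : Finset (Finset (W × Bool))}
    (hsub : ψ₁ ⊆ Reduct (renameCNF f φ) (f z, !b))
    (hunsat : ¬ CNFSatisfiable ψ₁) :
    ∃ u ⊆ φ, u.card ≤ ψ₁.card ∧ EntailsLit u (z, b) := by
  classical
  rw [reduct_rename_eq] at hsub
  obtain ⟨u, hus, hcard, htu⟩ := pullback_finset _ _ _ hsub
  refine ⟨u, hus.trans (Finset.filter_subset _ _), hcard, ?_⟩
  have hQ : u.filter (fun d => (f z, !b) ∉ d.image (fun m => (f m.1, m.2))) = u :=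
    Finset.filter_true_of_mem (fun d hd => (Finset.mem_filter.mp (hus hd)).2)
  have heq : Reduct (renameCNF f u) (f z, !b) =
      u.image (fun d => (d.image (fun m => (f m.1, m.2))).erase (LitCompl (f z, !b))) := by
    rw [reduct_rename_eq, hQ]
  have hsub' : ψ₁ ⊆ Reduct (renameCNF f u) (f z, !b) := by rw [heq]; exact htu
  have hunsat' := unsat_mono hsub' hunsat
  exact entails_of_rename hf ((entails_iff_unsat_reduct _ _ _).mpr hunsat')

end Aux

/-- For a CNF formula `φ` over variables `V`, `z ∈ V`, `k ≥ 1`, and two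
disjoint renamed copies `φ₁, φ₂` of `φ` (via injections `f₁, f₂` with disjoint ranges),
`z` is a `k`-backbone of `φ` iff `ψ = φ₁|_{z₁} ∪ φ₂|_{¬z₂}` has an unsatisfiable subset
of at most `k` clauses. -/
theorem stmt1 {V W : Type*} [DecidableEq V] [DecidableEq W]
    (φ : Finset (Finset (V × Bool))) (hok : ∀ c ∈ φ, ClauseOk c)
    (z : V) (k : ℕ) (hk : 1 ≤ k)
    (f₁ f₂ : V → W) (hf₁ : Function.Injective f₁) (hf₂ : Function.Injective f₂)
    (hdisj : ∀ u v : V, f₁ u ≠ f₂ v) :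
    KBackbone φ k z ↔
      ∃ ψ' ⊆ Reduct (renameCNF f₁ φ) (f₁ z, true) ∪ Reduct (renameCNF f₂ φ) (f₂ z, false),
        ψ'.card ≤ k ∧ ¬ CNFSatisfiable ψ' := by
  classical
  constructor
  · rintro ⟨ψ, hψφ, hcard, hE | hE⟩
    · -- ψ ⊨ z : copy 2, reduced at z₂ = false, is unsatisfiable
      refine ⟨Reduct (renameCNF f₂ ψ) (f₂ z, false), ?_, ?_, ?_⟩
      · exact (reduct_mono (Finset.image_subset_image hψφ) _).trans
          Finset.subset_union_right
      · exact le_trans (reduct_card_le _ _) (le_trans Finset.card_image_le hcard)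
      · have h := (entails_iff_unsat_reduct (renameCNF f₂ ψ) (f₂ z) true).mp
          (entails_rename f₂ hE)
        simpa using h
    · refine ⟨Reduct (renameCNF f₁ ψ) (f₁ z, true), ?_, ?_, ?_⟩
      · exact (reduct_mono (Finset.image_subset_image hψφ) _).trans
          Finset.subset_union_left
      · exact le_trans (reduct_card_le _ _) (le_trans Finset.card_image_le hcard)
      · have h := (entails_iff_unsat_reduct (renameCNF f₁ ψ) (f₁ z) false).mp
          (entails_rename f₁ hE)
        simpa using h
  · rintro ⟨ψ', hsub, hcard, hunsat⟩
    set R₁ := Reduct (renameCNF f₁ φ) (f₁ z, true) with hR₁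
    set R₂ := Reduct (renameCNF f₂ φ) (f₂ z, false) with hR₂
    have hsplit : ¬ CNFSatisfiable (ψ'.filter (· ∈ R₁)) ∨
        ¬ CNFSatisfiable (ψ'.filter (· ∉ R₁)) := by
      by_contra h
      push_neg at h
      obtain ⟨⟨τ₁, h₁⟩, ⟨τ₂, h₂⟩⟩ := h
      apply hunsat
      refine ⟨fun w => if w ∈ Set.range f₁ then τ₁ w else τ₂ w, ?_⟩
      intro c hc
      by_cases hcR : c ∈ R₁
      · obtain ⟨l, hl, hlv⟩ := h₁ c (Finset.mem_filter.mpr ⟨hc, hcR⟩)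
        refine ⟨l, hl, ?_⟩
        dsimp only
        rw [if_pos (reduct_rename_vars f₁ φ _ hcR hl)]
        exact hlv
      · obtain ⟨l, hl, hlv⟩ := h₂ c (Finset.mem_filter.mpr ⟨hc, hcR⟩)
        have hcR₂ : c ∈ R₂ := by
          rcases Finset.mem_union.mp (hsub hc) with h' | h'
          · exact absurd h' hcR
          · exact h'
        refine ⟨l, hl, ?_⟩
        have hnot : l.1 ∉ Set.range f₁ := by
          obtain ⟨v, hv⟩ := reduct_rename_vars f₂ φ _ hcR₂ hl
          rintro ⟨u, hu⟩
          exact hdisj u v (hu.trans hv.symm)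
        dsimp only
        rw [if_neg hnot]
        exact hlv
    rcases hsplit with hu | hu
    · -- unsat piece in copy 1 (z₁ = true) ⇒ ψ ⊨ ¬z
      have hsub₁ : ψ'.filter (· ∈ R₁) ⊆ Reduct (renameCNF f₁ φ) (f₁ z, !false) :=
        fun c hc => (Finset.mem_filter.mp hc).2
      obtain ⟨u, hus, hucard, hE⟩ := extract_backbone hf₁ φ z false hsub₁ hu
      exact ⟨u, hus, le_trans hucard (le_trans (Finset.card_filter_le _ _) hcard),
        Or.inr hE⟩
    · have hsub₂ : ψ'.filter (· ∉ R₁) ⊆ Reduct (renameCNF f₂ φ) (f₂ z, !true) := by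
        intro c hc
        obtain ⟨hc', hcR⟩ := Finset.mem_filter.mp hc
        rcases Finset.mem_union.mp (hsub hc') with h' | h'
        · exact absurd h' hcR
        · exact h'
      obtain ⟨u, hus, hucard, hE⟩ := extract_backbone hf₂ φ z true hsub₂ hu
      exact ⟨u, hus, le_trans hucard (le_trans (Finset.card_filter_le _ _) hcard),
        Or.inl hE⟩
end

section
/- Let φ be a definite Horn formula containing no unit clauses, let s, t ∈ Var(φ), and let k ≥ 1 be an integer. Then t is a (k+1)-backbone of the formula ψ = {{s}} ∪ φ if and only if there exists a hyperpath from s to t in φ consisting of at most k clauses. -/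
section AUXLB
variable {V : Type*} [DecidableEq V]

lemma hp_mono {ψ ψ' : Finset (Finset (V × Bool))} {s x : V}
    (h : IsHyperpath ψ s x) (hsub : ψ ⊆ ψ') : IsHyperpath ψ' s x := by
  induction h generalizing ψ' with
  | refl _ s => exact .refl _ s
  | step c hc hhead huniq hbody ih =>
    exact .step c (hsub hc) hhead huniq
      (fun l hl hneg => ih l hl hneg (Finset.erase_subset_erase _ hsub))

lemma hp_sat {ψ : Finset (Finset (V × Bool))} {s x : V} (h : IsHyperpath ψ s x)
    {τ : V → Bool} (hτ : SatCNF τ ψ) (hs : τ s = true) : τ x = true := by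
  induction h with
  | refl => exact hs
  | @step ψ' s t c hc hhead huniq hbody ih =>
    obtain ⟨l, hl, hlv⟩ := hτ c hc
    cases hb : l.2 with
    | true =>
      have := huniq l hl hb
      rw [this] at hlv; exact hlv
    | false =>
      have hlt := ih l hl hb (fun c' hc' => hτ c' (Finset.mem_of_mem_erase hc')) hs
      rw [hb] at hlv; rw [hlv] at hlt; exact absurd hlt (by simp)

lemma defHorn_head {c : Finset (V × Bool)} (h : IsDefHornClause c) :
    ∃ hh : V, (hh, true) ∈ c ∧ ∀ l ∈ c, l.2 = true → l = (hh, true) := by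
  obtain ⟨l, hl⟩ := Finset.card_eq_one.mp h
  have hlmem : l ∈ c.filter (fun l => l.2 = true) := by rw [hl]; exact Finset.mem_singleton_self l
  rw [Finset.mem_filter] at hlmem
  refine ⟨l.1, ?_, ?_⟩
  · have : l = (l.1, true) := by
      ext
      · rfl
      · exact hlmem.2
    rw [← this]; exact hlmem.1
  · intro l' hl' hpos
    have : l' ∈ c.filter (fun l => l.2 = true) := Finset.mem_filter.mpr ⟨hl', hpos⟩
    rw [hl, Finset.mem_singleton] at this
    subst this
    ext
    · rfl
    · exact hpos

/-- Clauses of `Φ` all of whose negative literals have variables in `S`. -/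
def firedLB (Φ : Finset (Finset (V × Bool))) (S : Finset V) : Finset (Finset (V × Bool)) :=
  Φ.filter (fun c => ∀ l ∈ c, l.2 = false → l.1 ∈ S)

/-- Staged forward-chaining closure. -/
def stageLB (Φ : Finset (Finset (V × Bool))) (s : V) : ℕ → Finset V
  | 0 => {s}
  | n+1 => stageLB Φ s n ∪
      (firedLB Φ (stageLB Φ s n)).biUnion
        (fun c => (c.filter (fun l => l.2 = true)).image Prod.fst)

lemma firedLB_mono {Φ : Finset (Finset (V × Bool))} {S T : Finset V} (h : S ⊆ T) :
    firedLB Φ S ⊆ firedLB Φ T := by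
  intro c hc
  rw [firedLB, Finset.mem_filter] at *
  exact ⟨hc.1, fun l hl hneg => h (hc.2 l hl hneg)⟩

lemma stageLB_mono_succ (Φ : Finset (Finset (V × Bool))) (s : V) (n : ℕ) :
    stageLB Φ s n ⊆ stageLB Φ s (n+1) := Finset.subset_union_left

lemma stageLB_mono (Φ : Finset (Finset (V × Bool))) (s : V) {n m : ℕ} (h : n ≤ m) :
    stageLB Φ s n ⊆ stageLB Φ s m := by
  induction h with
  | refl => exact Finset.Subset.refl _
  | step _ ih => exact ih.trans (stageLB_mono_succ _ _ _)

lemma stageLB_hp {Φ : Finset (Finset (V × Bool))} (hdh : ∀ c ∈ Φ, IsDefHornClause c)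
    (s : V) : ∀ n, ∀ x ∈ stageLB Φ s (n+1),
      ∃ ψ ⊆ firedLB Φ (stageLB Φ s n), IsHyperpath ψ s x := by
  intro n
  induction n with
  | zero =>
    intro x hx
    rw [stageLB, Finset.mem_union] at hx
    rcases hx with hx | hx
    · rw [stageLB, Finset.mem_singleton] at hx
      subst hx
      exact ⟨∅, Finset.empty_subset _, .refl _ _⟩
    · rw [Finset.mem_biUnion] at hx
      obtain ⟨c, hc, hxm⟩ := hx
      rw [Finset.mem_image] at hxm
      obtain ⟨l, hlm, hl1⟩ := hxm
      rw [Finset.mem_filter] at hlm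
      have hcΦ : c ∈ Φ := (Finset.mem_filter.mp hc).1
      obtain ⟨hh, hhm, hhuniq⟩ := defHorn_head (hdh c hcΦ)
      have hxh : x = hh := by
        have := hhuniq l hlm.1 hlm.2
        rw [this] at hl1; rw [← hl1]
      subst hxh
      refine ⟨{c}, Finset.singleton_subset_iff.mpr hc, ?_⟩
      refine .step c (Finset.mem_singleton_self c) hhm hhuniq ?_
      intro l' hl' hneg
      have : l'.1 ∈ stageLB Φ s 0 := (Finset.mem_filter.mp hc).2 l' hl' hneg
      rw [stageLB, Finset.mem_singleton] at this
      rw [this]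
      exact .refl _ _
  | succ m ih =>
    intro x hx
    by_cases hxm : x ∈ stageLB Φ s (m+1)
    · obtain ⟨ψ, hψ, hhp⟩ := ih x hxm
      exact ⟨ψ, hψ.trans (firedLB_mono (stageLB_mono_succ _ _ _)), hhp⟩
    rw [stageLB, Finset.mem_union] at hx
    rcases hx with hx | hx
    · exact absurd hx hxm
    rw [Finset.mem_biUnion] at hx
    obtain ⟨c, hc, hxmem⟩ := hx
    rw [Finset.mem_image] at hxmem
    obtain ⟨l, hlm, hl1⟩ := hxmem
    rw [Finset.mem_filter] at hlm
    have hcΦ : c ∈ Φ := (Finset.mem_filter.mp hc).1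
    obtain ⟨hh, hhm, hhuniq⟩ := defHorn_head (hdh c hcΦ)
    have hxh : x = hh := by
      have := hhuniq l hlm.1 hlm.2
      rw [this] at hl1; rw [← hl1]
    subst hxh
    -- c is not fired at stage m
    have hcnm : c ∉ firedLB Φ (stageLB Φ s m) := by
      intro hcon
      apply hxm
      rw [stageLB, Finset.mem_union]
      right
      rw [Finset.mem_biUnion]
      refine ⟨c, hcon, Finset.mem_image.mpr ⟨(x, true), Finset.mem_filter.mpr ⟨hhm, rfl⟩, rfl⟩⟩
    refine ⟨insert c (firedLB Φ (stageLB Φ s m)), ?_, ?_⟩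
    · exact Finset.insert_subset hc (firedLB_mono (stageLB_mono_succ _ _ _))
    refine .step c (Finset.mem_insert_self _ _) hhm hhuniq ?_
    intro l' hl' hneg
    rw [Finset.erase_insert hcnm]
    have hstage : l'.1 ∈ stageLB Φ s (m+1) := (Finset.mem_filter.mp hc).2 l' hl' hneg
    obtain ⟨ψ, hψ, hhp⟩ := ih l'.1 hstage
    exact hp_mono hhp hψ

lemma exists_uniform_stage {Φ : Finset (Finset (V × Bool))} {s : V}
    (S : Finset (V × Bool)) (h : ∀ l ∈ S, ∃ n, l.1 ∈ stageLB Φ s n) :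
    ∃ n, ∀ l ∈ S, l.1 ∈ stageLB Φ s n := by
  classical
  induction S using Finset.induction with
  | empty => exact ⟨0, by simp⟩
  | @insert a S ha ih =>
    obtain ⟨n, hn⟩ := ih (fun l hl => h l (Finset.mem_insert_of_mem hl))
    obtain ⟨m, hm⟩ := h _ (Finset.mem_insert_self _ _)
    refine ⟨max n m, ?_⟩
    intro l hl
    rcases Finset.mem_insert.mp hl with rfl | hl
    · exact stageLB_mono Φ s (le_max_right n m) hm
    · exact stageLB_mono Φ s (le_max_left n m) (hn l hl)

end AUXLB
/-- For a definite Horn formula `φ` without unit clauses, variables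
`s, t ∈ Var(φ)`, and `k ≥ 1`: `t` is a `(k+1)`-backbone of `ψ = {{s}} ∪ φ` iff there is
a hyperpath from `s` to `t` in `φ` consisting of at most `k` clauses. -/
theorem stmt4 {V : Type*} [DecidableEq V] (φ : Finset (Finset (V × Bool)))
    (hok : ∀ c ∈ φ, ClauseOk c) (hdh : ∀ c ∈ φ, IsDefHornClause c)
    (hnu : ∀ c ∈ φ, c.card ≠ 1)
    (s t : V) (hs : s ∈ cnfVars φ) (ht : t ∈ cnfVars φ) (k : ℕ) (hk : 1 ≤ k) :
    KBackbone (insert ({(s, true)} : Finset (V × Bool)) φ) (k + 1) t ↔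
      ∃ φ' ⊆ φ, φ'.card ≤ k ∧ IsHyperpath φ' s t := by
  constructor
  · -- forward: backbone → hyperpath
    rintro ⟨ψ', hsub, hcard, hent⟩
    classical
    -- the all-true assignment satisfies ψ', ruling out entailment of ¬t
    have hTrue : SatCNF (fun _ => true) ψ' := by
      intro c hc
      rcases Finset.mem_insert.mp (hsub hc) with rfl | hcφ
      · exact ⟨(s, true), Finset.mem_singleton_self _, rfl⟩
      · obtain ⟨hh, hhm, _⟩ := defHorn_head (hdh c hcφ)
        exact ⟨(hh, true), hhm, rfl⟩
    have hent' : EntailsLit ψ' (t, true) := by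
      rcases hent with h | h
      · exact h
      · exact absurd (h (fun _ => true) hTrue) (by simp)
    -- the singleton {(s,true)} must be in ψ'
    have hsing : ({(s, true)} : Finset (V × Bool)) ∈ ψ' := by
      by_contra hns
      -- then ψ' ⊆ φ and the all-false assignment satisfies ψ'
      have hsubφ : ψ' ⊆ φ := by
        intro c hc
        rcases Finset.mem_insert.mp (hsub hc) with rfl | hcφ
        · exact absurd hc hns
        · exact hcφ
      have hFalse : SatCNF (fun _ => false) ψ' := by
        intro c hc
        have hcφ := hsubφ hc
        have hneg : ∃ l ∈ c, l.2 = false := by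
          by_contra hcon
          push_neg at hcon
          have hall : ∀ l ∈ c, l.2 = true := by
            intro l hl
            cases hb : l.2
            · exact absurd hb (hcon l hl)
            · rfl
          have : c.filter (fun l => l.2 = true) = c := Finset.filter_eq_self.mpr hall
          have := hdh c hcφ
          rw [IsDefHornClause] at this
          rw [‹c.filter (fun l => l.2 = true) = c›] at this
          exact hnu c hcφ this
        obtain ⟨l, hl, hneg⟩ := hneg
        exact ⟨l, hl, hneg.symm⟩
      exact absurd (hent' (fun _ => false) hFalse) (by simp)
    -- set φ'' = ψ' minus the unit clause
    set φ'' : Finset (Finset (V × Bool)) := ψ'.erase {(s, true)} with hφ''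
    have hφ''φ : φ'' ⊆ φ := by
      intro c hc
      have hc' := Finset.mem_of_mem_erase hc
      rcases Finset.mem_insert.mp (hsub hc') with rfl | hcφ
      · exact absurd rfl (Finset.ne_of_mem_erase hc)
      · exact hcφ
    have hφ''card : φ''.card ≤ k := by
      have := Finset.card_erase_of_mem hsing
      rw [hφ'', this]
      omega
    -- assignment from staged forward chaining
    let τ : V → Bool := fun x => if ∃ n, x ∈ stageLB φ'' s n then true else false
    have hτs : τ s = true := by
      have hex : ∃ n, s ∈ stageLB φ'' s n := ⟨0, Finset.mem_singleton_self s⟩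
      simp only [τ, if_pos hex]
    have hτsat : SatCNF τ ψ' := by
      intro c hc
      by_cases hcs : c = {(s, true)}
      · subst hcs
        exact ⟨(s, true), Finset.mem_singleton_self _, hτs⟩
      have hcφ'' : c ∈ φ'' := Finset.mem_erase.mpr ⟨hcs, hc⟩
      have hcφ : c ∈ φ := hφ''φ hcφ''
      by_cases hbody : ∀ l ∈ c, l.2 = false → τ l.1 = true
      · -- all bodies reached: clause fires
        have hall : ∀ l ∈ c.filter (fun l => l.2 = false), ∃ n, l.1 ∈ stageLB φ'' s n := by
          intro l hl
          rw [Finset.mem_filter] at hl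
          have := hbody l hl.1 hl.2
          simp only [τ] at this
          by_contra hcon
          rw [if_neg hcon] at this
          exact absurd this (by simp)
        obtain ⟨n, hn⟩ := exists_uniform_stage _ hall
        have hfired : c ∈ firedLB φ'' (stageLB φ'' s n) :=
          Finset.mem_filter.mpr ⟨hcφ'', fun l hl hneg =>
            hn l (Finset.mem_filter.mpr ⟨hl, hneg⟩)⟩
        obtain ⟨hh, hhm, _⟩ := defHorn_head (hdh c hcφ)
        have hhh : hh ∈ stageLB φ'' s (n+1) := by
          rw [stageLB, Finset.mem_union]
          right
          rw [Finset.mem_biUnion]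
          exact ⟨c, hfired, Finset.mem_image.mpr
            ⟨(hh, true), Finset.mem_filter.mpr ⟨hhm, rfl⟩, rfl⟩⟩
        refine ⟨(hh, true), hhm, ?_⟩
        have hex : ∃ m, hh ∈ stageLB φ'' s m := ⟨n+1, hhh⟩
        simp only [τ, if_pos hex]
      · push_neg at hbody
        obtain ⟨l, hl, hneg, hτl⟩ := hbody
        refine ⟨l, hl, ?_⟩
        rw [hneg]
        cases hb : τ l.1
        · rfl
        · exact absurd hb hτl
    -- t is reached
    have hτt := hent' τ hτsat
    have ht' : ∃ n, t ∈ stageLB φ'' s n := by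
      by_contra hcon
      simp only [τ, if_neg hcon] at hτt
      exact absurd hτt (by simp)
    obtain ⟨n, hn⟩ := ht'
    have hn' : t ∈ stageLB φ'' s (n+1) := stageLB_mono_succ _ _ _ hn
    obtain ⟨ψ, hψ, hhp⟩ := stageLB_hp (fun c hc => hdh c (hφ''φ hc)) s n t hn'
    have hψφ'' : ψ ⊆ φ'' := hψ.trans (Finset.filter_subset _ _)
    exact ⟨ψ, hψφ''.trans hφ''φ, le_trans (Finset.card_le_card hψφ'') hφ''card,
      hhp⟩
  · -- backward: hyperpath → backbone
    rintro ⟨φ', hsub, hcard, hhp⟩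
    refine ⟨insert {(s, true)} φ', Finset.insert_subset_insert _ hsub,
      le_trans (Finset.card_insert_le _ _) (by omega), Or.inl ?_⟩
    intro τ hτ
    have hτs : τ s = true := by
      obtain ⟨l, hl, hlv⟩ := hτ _ (Finset.mem_insert_self _ _)
      rw [Finset.mem_singleton] at hl
      subst hl
      exact hlv
    exact hp_sat hhp (fun c hc => hτ c (Finset.mem_insert_of_mem hc)) hτs
end

section
/- Let k ≥ 2 be an integer and let G = (V, E) be a graph with a proper k-coloring whose color classes are V₁, …, V_k (so every edge joins vertices of distinct classes). Let s, t, and p_{i,j} for 1 ≤ i < j ≤ k be pairwise distinct fresh variables not in V, and define the definite Horn formula φ = {{¬s, v} : v ∈ V} ∪ {{¬u, ¬v, p_{i,j}} : 1 ≤ i < j ≤ k, u ∈ Vᵢ, v ∈ Vⱼ, {u, v} ∈ E} ∪ {{¬p_{1,2}, …, ¬p_{k−1,k}} ∪ {t}}. Then G contains a clique with exactly one vertex from each color class if and only if φ contains a hyperpath from s to t consisting of at most k' = k + k(k−1)/2 + 1 clauses. -/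
/-- The definite Horn formula of the reduction from Multicolored Clique, over the
variable type `α ⊕ ((Fin k × Fin k) ⊕ Bool)`: graph vertices `v` are `Sum.inl v`,
`p_{i,j}` is `Sum.inr (Sum.inl (i, j))`, `s` is `Sum.inr (Sum.inr true)` and `t` is
`Sum.inr (Sum.inr false)`. It consists of the clauses `{¬s, v}` for every vertex `v`,
the clauses `{¬u, ¬v, p_{i,j}}` for every edge `{u, v}` with `col u = i < j = col v`,
and the single clause `{¬p_{1,2}, …, ¬p_{k-1,k}, t}`. -/
def cliqueFormula {α : Type*} [Fintype α] [DecidableEq α] {k : ℕ} (G : SimpleGraph α)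
    [DecidableRel G.Adj] (col : α → Fin k) :
    Finset (Finset ((α ⊕ ((Fin k × Fin k) ⊕ Bool)) × Bool)) :=
  (Finset.univ.image (fun v : α =>
      ({(Sum.inr (Sum.inr true), false), (Sum.inl v, true)} :
        Finset ((α ⊕ ((Fin k × Fin k) ⊕ Bool)) × Bool))))
  ∪ ((Finset.univ.filter (fun uv : α × α => G.Adj uv.1 uv.2 ∧ col uv.1 < col uv.2)).image
      (fun uv =>
        ({(Sum.inl uv.1, false), (Sum.inl uv.2, false),
          (Sum.inr (Sum.inl (col uv.1, col uv.2)), true)} :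
          Finset ((α ⊕ ((Fin k × Fin k) ⊕ Bool)) × Bool))))
  ∪ {insert ((Sum.inr (Sum.inr false) : α ⊕ ((Fin k × Fin k) ⊕ Bool)), true)
      ((Finset.univ.filter (fun ij : Fin k × Fin k => ij.1 < ij.2)).image
        (fun ij => ((Sum.inr (Sum.inl ij) : α ⊕ ((Fin k × Fin k) ⊕ Bool)), false)))}


/-! ### Auxiliary definitions and lemmas for the proof -/

lemma hp_inv {V : Type*} [DecidableEq V] {φ' : Finset (Finset (V × Bool))} {s t : V}
    (h : IsHyperpath φ' s t) (hne : t ≠ s) :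
    ∃ c ∈ φ', (t, true) ∈ c ∧ ∀ l ∈ c, l.2 = false → IsHyperpath (φ'.erase c) s l.1 := by
  cases h with
  | refl => exact absurd rfl hne
  | step c hc ht _ hbr => exact ⟨c, hc, ht, hbr⟩

lemma hp_single {V : Type*} [DecidableEq V] {ψ : Finset (Finset (V × Bool))} {s x : V}
    (c : Finset (V × Bool)) (hc : c ∈ ψ) (h1 : (x, true) ∈ c)
    (h2 : ∀ l ∈ c, l.2 = true → l = (x, true)) (h3 : ∀ l ∈ c, l.2 = false → l.1 = s) :
    IsHyperpath ψ s x := by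
  refine IsHyperpath.step c hc h1 h2 (fun l hl hl2 => ?_)
  rw [h3 l hl hl2]; exact IsHyperpath.refl _ _

def vClause {α : Type*} {k : ℕ} [DecidableEq α] (a : α) :
    Finset ((α ⊕ ((Fin k × Fin k) ⊕ Bool)) × Bool) :=
  {(Sum.inr (Sum.inr true), false), (Sum.inl a, true)}

def eClause {α : Type*} {k : ℕ} [DecidableEq α] (u v : α) (ij : Fin k × Fin k) :
    Finset ((α ⊕ ((Fin k × Fin k) ⊕ Bool)) × Bool) :=
  {(Sum.inl u, false), (Sum.inl v, false), (Sum.inr (Sum.inl ij), true)}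

def tClause (α : Type*) (k : ℕ) [DecidableEq α] :
    Finset ((α ⊕ ((Fin k × Fin k) ⊕ Bool)) × Bool) :=
  insert ((Sum.inr (Sum.inr false) : α ⊕ ((Fin k × Fin k) ⊕ Bool)), true)
    ((Finset.univ.filter (fun ij : Fin k × Fin k => ij.1 < ij.2)).image
      (fun ij => ((Sum.inr (Sum.inl ij) : α ⊕ ((Fin k × Fin k) ⊕ Bool)), false)))

lemma mem_cliqueFormula_iff {α : Type*} [Fintype α] [DecidableEq α] {k : ℕ}
    (G : SimpleGraph α) [DecidableRel G.Adj] (col : α → Fin k)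
    {c : Finset ((α ⊕ ((Fin k × Fin k) ⊕ Bool)) × Bool)} :
    c ∈ cliqueFormula G col ↔
      (∃ v : α, c = vClause v) ∨
      (∃ uv : α × α, (G.Adj uv.1 uv.2 ∧ col uv.1 < col uv.2) ∧
        c = eClause uv.1 uv.2 (col uv.1, col uv.2)) ∨
      c = tClause α k := by
  simp only [cliqueFormula, vClause, eClause, tClause, Finset.mem_union, Finset.mem_image,
    Finset.mem_filter, Finset.mem_singleton, Finset.mem_univ, true_and]
  constructor
  · rintro ((⟨v, hv⟩ | ⟨uv, h1, h2⟩) | h)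
    · exact Or.inl ⟨v, hv.symm⟩
    · exact Or.inr (Or.inl ⟨uv, h1, h2.symm⟩)
    · exact Or.inr (Or.inr h)
  · rintro (⟨v, hv⟩ | ⟨uv, h1, h2⟩ | h)
    · exact Or.inl (Or.inl ⟨v, hv.symm⟩)
    · exact Or.inl (Or.inr ⟨uv, h1, h2.symm⟩)
    · exact Or.inr h

theorem pairsCard (k : ℕ) :
    ((Finset.univ : Finset (Fin k × Fin k)).filter fun ij => ij.1 < ij.2).card = k*(k-1)/2 := by
  rw [Finset.card_eq_sum_card_fiberwise (f := Prod.snd) (t := Finset.univ) (by intros; simp)]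
  have h1 : ∀ j : Fin k, (((Finset.univ : Finset (Fin k × Fin k)).filter
      fun ij => ij.1 < ij.2).filter fun ij => ij.2 = j).card = (j : ℕ) := by
    intro j
    rw [← Fin.card_Iio (b := j)]
    apply Finset.card_bij (fun ij _ => ij.1)
    · intro a ha; simp only [Finset.mem_filter] at ha; simp [Finset.mem_Iio, ha.2 ▸ ha.1.2]
    · intro a ha b hb hab
      simp only [Finset.mem_filter] at ha hb
      exact Prod.ext hab (ha.2.trans hb.2.symm)
    · intro b hb; exact ⟨(b, j), by simpa using Finset.mem_Iio.mp hb, rfl⟩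
  simp only [h1]
  rw [Fin.sum_univ_eq_sum_range (fun j => j)]
  rw [Finset.sum_range_id]

/-- Let `k ≥ 2` and let `G` be a graph with a proper `k`-coloring `col`.
Then `G` has a clique with exactly one vertex from each color class (given by a system
of representatives `f` of the color classes that is pairwise adjacent) iff the formula
`cliqueFormula G col` contains a hyperpath from `s` to `t` consisting of at most
`k' = k + k(k-1)/2 + 1` clauses. -/
theorem stmt6 {α : Type*} [Fintype α] [DecidableEq α] (k : ℕ) (hk : 2 ≤ k)
    (G : SimpleGraph α) [DecidableRel G.Adj] (col : α → Fin k)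
    (hcol : ∀ u v : α, G.Adj u v → col u ≠ col v) :
    (∃ f : Fin k → α, (∀ i, col (f i) = i) ∧ ∀ i j, i ≠ j → G.Adj (f i) (f j)) ↔
      ∃ φ' ⊆ cliqueFormula G col, φ'.card ≤ k + k * (k - 1) / 2 + 1 ∧
        IsHyperpath φ' (Sum.inr (Sum.inr true)) (Sum.inr (Sum.inr false)) := by
  classical
  constructor
  · rintro ⟨f, hfc, hfa⟩
    set P := (Finset.univ : Finset (Fin k × Fin k)).filter (fun ij => ij.1 < ij.2) with hP
    refine ⟨({tClause α k} ∪ P.image (fun ij => eClause (f ij.1) (f ij.2) ij))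
        ∪ (Finset.univ : Finset (Fin k)).image (fun i => vClause (f i)), ?_, ?_, ?_⟩
    · intro c hc
      rw [mem_cliqueFormula_iff]
      rcases Finset.mem_union.mp hc with hc | hc
      · rcases Finset.mem_union.mp hc with hc | hc
        · exact Or.inr (Or.inr (Finset.mem_singleton.mp hc))
        · obtain ⟨ij, hij, rfl⟩ := Finset.mem_image.mp hc
          rw [hP, Finset.mem_filter] at hij
          refine Or.inr (Or.inl ⟨(f ij.1, f ij.2), ⟨hfa _ _ (ne_of_lt hij.2), ?_⟩, ?_⟩)
          · simp only [hfc]; exact hij.2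
          · simp only [hfc]
      · obtain ⟨i, _, rfl⟩ := Finset.mem_image.mp hc
        exact Or.inl ⟨f i, rfl⟩
    · calc (({tClause α k} ∪ P.image (fun ij => eClause (f ij.1) (f ij.2) ij))
          ∪ (Finset.univ : Finset (Fin k)).image (fun i => vClause (f i))).card
          ≤ ({tClause α k} ∪ P.image (fun ij => eClause (f ij.1) (f ij.2) ij)).card
            + ((Finset.univ : Finset (Fin k)).image (fun i => vClause (f i))).card :=
            Finset.card_union_le _ _
        _ ≤ (1 + P.card) + k := by
            gcongr
            · calc _ ≤ ({tClause α k} : Finset _).card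
                  + (P.image (fun ij => eClause (f ij.1) (f ij.2) ij)).card :=
                  Finset.card_union_le _ _
                _ ≤ 1 + P.card := by
                  simp only [Finset.card_singleton]
                  gcongr
                  exact Finset.card_image_le
            · calc _ ≤ (Finset.univ : Finset (Fin k)).card := Finset.card_image_le
                _ = k := by simp
        _ ≤ k + k * (k - 1) / 2 + 1 := by rw [hP, pairsCard]; omega
    · refine IsHyperpath.step (tClause α k) ?_ ?_ ?_ ?_
      · exact Finset.mem_union_left _ (Finset.mem_union_left _ (Finset.mem_singleton_self _))
      · exact Finset.mem_insert_self _ _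
      · intro l hl hl2
        rcases Finset.mem_insert.mp hl with h | h
        · exact h
        · obtain ⟨ij, _, rfl⟩ := Finset.mem_image.mp h
          simp at hl2
      · intro l hl hl2
        rcases Finset.mem_insert.mp hl with h | h
        · rw [h] at hl2; simp at hl2
        · obtain ⟨ij, hij, rfl⟩ := Finset.mem_image.mp h
          rw [Finset.mem_filter] at hij
          -- hyperpath to p_{ij}
          refine IsHyperpath.step (eClause (f ij.1) (f ij.2) ij) ?_ ?_ ?_ ?_
          · refine Finset.mem_erase.mpr ⟨?_, ?_⟩
            · intro h
              have : ((Sum.inr (Sum.inr false) : α ⊕ ((Fin k × Fin k) ⊕ Bool)), true)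
                  ∈ eClause (f ij.1) (f ij.2) ij := h ▸ Finset.mem_insert_self _ _
              simp [eClause] at this
            · exact Finset.mem_union_left _ (Finset.mem_union_right _
                (Finset.mem_image.mpr ⟨ij, by rw [hP, Finset.mem_filter]; exact hij, rfl⟩))
          · simp [eClause]
          · intro l hl hl2
            simp only [eClause, Finset.mem_insert, Finset.mem_singleton] at hl
            rcases hl with rfl | rfl | rfl
            · simp at hl2
            · simp at hl2
            · rfl
          · intro l hl hl2
            simp only [eClause, Finset.mem_insert, Finset.mem_singleton] at hl
            have hvmem : ∀ i : Fin k, vClause (f i) ∈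
                ((({tClause α k} ∪ P.image (fun ij => eClause (f ij.1) (f ij.2) ij))
                ∪ (Finset.univ : Finset (Fin k)).image (fun i => vClause (f i))).erase
                  (tClause α k)).erase (eClause (f ij.1) (f ij.2) ij) := by
              intro i
              refine Finset.mem_erase.mpr ⟨?_, Finset.mem_erase.mpr ⟨?_, ?_⟩⟩
              · intro h
                have : ((Sum.inr (Sum.inl ij) : α ⊕ ((Fin k × Fin k) ⊕ Bool)), true)
                    ∈ vClause (k := k) (f i) := by rw [h]; simp [eClause]
                simp [vClause] at this
              · intro h
                have : ((Sum.inr (Sum.inr false) : α ⊕ ((Fin k × Fin k) ⊕ Bool)), true)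
                    ∈ vClause (k := k) (f i) := by rw [h]; exact Finset.mem_insert_self _ _
                simp [vClause] at this
              · exact Finset.mem_union_right _ (Finset.mem_image.mpr ⟨i, Finset.mem_univ _, rfl⟩)
            rcases hl with rfl | rfl | rfl
            · refine hp_single (vClause (f ij.1)) (hvmem ij.1) (by simp [vClause]) ?_ ?_
              · intro l hl hl2
                simp only [vClause, Finset.mem_insert, Finset.mem_singleton] at hl
                rcases hl with rfl | rfl
                · simp at hl2
                · rfl
              · intro l hl hl2
                simp only [vClause, Finset.mem_insert, Finset.mem_singleton] at hl
                rcases hl with rfl | rfl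
                · rfl
                · simp at hl2
            · refine hp_single (vClause (f ij.2)) (hvmem ij.2) (by simp [vClause]) ?_ ?_
              · intro l hl hl2
                simp only [vClause, Finset.mem_insert, Finset.mem_singleton] at hl
                rcases hl with rfl | rfl
                · simp at hl2
                · rfl
              · intro l hl hl2
                simp only [vClause, Finset.mem_insert, Finset.mem_singleton] at hl
                rcases hl with rfl | rfl
                · rfl
                · simp at hl2
            · simp at hl2
  · rintro ⟨φ', hsub, hcard, hp⟩
    obtain ⟨c, hcφ, htc, hbr⟩ := hp_inv hp (by simp)
    rcases (mem_cliqueFormula_iff G col).mp (hsub hcφ) with ⟨w, rfl⟩ | ⟨uv, _, rfl⟩ | rfl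
    · simp [vClause] at htc
    · simp [eClause] at htc
    -- key extraction
    have key : ∀ i j : Fin k, i < j → ∃ u v : α, G.Adj u v ∧ col u = i ∧ col v = j ∧
        eClause u v (i, j) ∈ φ' ∧ vClause u ∈ φ' ∧ vClause v ∈ φ' := by
      intro i j hij
      have hl : ((Sum.inr (Sum.inl (i, j)) : α ⊕ ((Fin k × Fin k) ⊕ Bool)), false)
          ∈ tClause α k := by
        refine Finset.mem_insert_of_mem (Finset.mem_image.mpr ⟨(i, j), ?_, rfl⟩)
        simp [hij]
      have hp2 := hbr _ hl rfl
      obtain ⟨c₂, hc₂, hpl, hbr₂⟩ := hp_inv hp2 (by simp)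
      have hc₂φ : c₂ ∈ φ' := Finset.mem_of_mem_erase hc₂
      rcases (mem_cliqueFormula_iff G col).mp (hsub hc₂φ) with ⟨w, rfl⟩ | ⟨uv, ⟨hadj, _⟩, rfl⟩ | rfl
      · simp [vClause] at hpl
      · have hij2 : col uv.1 = i ∧ col uv.2 = j := by
          simp only [eClause, Finset.mem_insert, Finset.mem_singleton, Prod.mk.injEq] at hpl
          rcases hpl with ⟨h, _⟩ | ⟨h, _⟩ | ⟨h, _⟩
          · exact absurd h (by simp)
          · exact absurd h (by simp)
          · obtain ⟨h1, h2⟩ := Prod.mk.injEq .. ▸ Sum.inl.inj (Sum.inr.inj h)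
            exact ⟨h1.symm, h2.symm⟩
        have hvc : ∀ a : α, (Sum.inl a, false) ∈ eClause uv.1 uv.2 (col uv.1, col uv.2) →
            vClause (k := k) a ∈ φ' := by
          intro a ha
          have hpu := hbr₂ _ ha rfl
          obtain ⟨c₃, hc₃, hpl₃, _⟩ := hp_inv hpu (by simp)
          have hc₃φ : c₃ ∈ φ' :=
            Finset.mem_of_mem_erase (Finset.mem_of_mem_erase hc₃)
          rcases (mem_cliqueFormula_iff G col).mp (hsub hc₃φ) with ⟨w, rfl⟩ | ⟨uv', _, rfl⟩ | rfl
          · have : a = w := by simpa [vClause] using hpl₃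
            rw [this]; exact hc₃φ
          · simp [eClause] at hpl₃
          · simp [tClause] at hpl₃
        have hE : eClause uv.1 uv.2 (i, j) ∈ φ' := by
          rw [← hij2.1, ← hij2.2]; exact hc₂φ
        exact ⟨uv.1, uv.2, hadj, hij2.1, hij2.2, hE,
          hvc uv.1 (by simp [eClause]), hvc uv.2 (by simp [eClause])⟩
      · simp [tClause] at hpl
    choose u v hadj hcu hcv hE hVu hVv using key
    -- counting
    set P := (Finset.univ : Finset (Fin k × Fin k)).filter (fun ij => ij.1 < ij.2) with hP
    have hlt : ∀ x : {ij // ij ∈ P}, x.1.1 < x.1.2 := fun x => (Finset.mem_filter.mp x.2).2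
    set S := (Finset.univ : Finset α).filter (fun a => vClause (k := k) a ∈ φ') with hS
    set T2 := P.attach.image
      (fun x => eClause (u x.1.1 x.1.2 (hlt x)) (v x.1.1 x.1.2 (hlt x)) (x.1.1, x.1.2)) with hT2
    set A3 := S.image (fun a => vClause (k := k) a) with hA3
    have hsub2 : insert (tClause α k) (T2 ∪ A3) ⊆ φ' := by
      intro d hd
      rcases Finset.mem_insert.mp hd with rfl | hd
      · exact hcφ
      rcases Finset.mem_union.mp hd with hd | hd
      · obtain ⟨x, _, rfl⟩ := Finset.mem_image.mp hd
        exact hE _ _ _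
      · obtain ⟨a, ha, rfl⟩ := Finset.mem_image.mp hd
        exact (Finset.mem_filter.mp ha).2
    have hT2card : T2.card = P.card := by
      rw [hT2, Finset.card_image_of_injOn, Finset.card_attach]
      intro x _ y _ hxy
      beta_reduce at hxy
      have : ((Sum.inr (Sum.inl (y.1.1, y.1.2)) : α ⊕ ((Fin k × Fin k) ⊕ Bool)), true)
          ∈ eClause (u x.1.1 x.1.2 (hlt x)) (v x.1.1 x.1.2 (hlt x)) (x.1.1, x.1.2) := by
        rw [hxy]; simp [eClause]
      simp only [eClause, Finset.mem_insert, Finset.mem_singleton, Prod.mk.injEq] at this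
      rcases this with ⟨h, _⟩ | ⟨h, _⟩ | ⟨h, _⟩
      · exact absurd h (by simp)
      · exact absurd h (by simp)
      · obtain ⟨h1, h2⟩ := Prod.mk.injEq .. ▸ Sum.inl.inj (Sum.inr.inj h)
        exact Subtype.ext (Prod.ext h1.symm h2.symm)
    have hA3card : A3.card = S.card := by
      rw [hA3, Finset.card_image_of_injOn]
      intro a _ b _ hab
      beta_reduce at hab
      have : ((Sum.inl a : α ⊕ ((Fin k × Fin k) ⊕ Bool)), true) ∈ vClause (k := k) b := by
        rw [← hab]; simp [vClause]
      simpa [vClause] using this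
    have hdisj : Disjoint T2 A3 := by
      rw [Finset.disjoint_left]
      intro d hd hd2
      obtain ⟨x, _, rfl⟩ := Finset.mem_image.mp hd
      obtain ⟨a, _, hab⟩ := Finset.mem_image.mp hd2
      have : ((Sum.inr (Sum.inl (x.1.1, x.1.2)) : α ⊕ ((Fin k × Fin k) ⊕ Bool)), true)
          ∈ vClause (k := k) a := by rw [hab]; simp [eClause]
      simp [vClause] at this
    have htnotin : tClause α k ∉ T2 ∪ A3 := by
      intro h
      rcases Finset.mem_union.mp h with h | h
      · obtain ⟨x, _, hx⟩ := Finset.mem_image.mp h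
        have : ((Sum.inr (Sum.inr false) : α ⊕ ((Fin k × Fin k) ⊕ Bool)), true)
            ∈ eClause (u x.1.1 x.1.2 (hlt x)) (v x.1.1 x.1.2 (hlt x)) (x.1.1, x.1.2) := by
          rw [hx]; exact Finset.mem_insert_self _ _
        simp [eClause] at this
      · obtain ⟨a, _, hx⟩ := Finset.mem_image.mp h
        have : ((Sum.inr (Sum.inr false) : α ⊕ ((Fin k × Fin k) ⊕ Bool)), true)
            ∈ vClause (k := k) a := by
          rw [hx]; exact Finset.mem_insert_self _ _
        simp [vClause] at this
    have hcount : 1 + k * (k - 1) / 2 + S.card ≤ φ'.card := by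
      have h1 : (insert (tClause α k) (T2 ∪ A3)).card ≤ φ'.card := Finset.card_le_card hsub2
      rw [Finset.card_insert_of_notMem htnotin, Finset.card_union_of_disjoint hdisj,
        hT2card, hA3card, hP, pairsCard] at h1
      omega
    have hSk : S.card ≤ k := by omega
    -- surjectivity of col on S
    have hsurj : ∀ i : Fin k, ∃ a ∈ S, col a = i := by
      intro i
      have hk0 : 0 < k := by omega
      by_cases h0 : (⟨0, hk0⟩ : Fin k) < i
      · refine ⟨v ⟨0, hk0⟩ i h0, ?_, hcv _ _ _⟩
        rw [hS, Finset.mem_filter]; exact ⟨Finset.mem_univ _, hVv _ _ _⟩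
      · have hi0 : i = ⟨0, hk0⟩ :=
          le_antisymm (not_lt.mp h0) (by simp [Fin.le_def])
        have h01 : i < (⟨1, by omega⟩ : Fin k) := by
          rw [Fin.lt_def, hi0]; exact Nat.zero_lt_one
        refine ⟨u i ⟨1, by omega⟩ h01, ?_, hcu _ _ _⟩
        rw [hS, Finset.mem_filter]; exact ⟨Finset.mem_univ _, hVu _ _ _⟩
    have himg : S.image col = Finset.univ := by
      rw [Finset.eq_univ_iff_forall]
      intro i
      obtain ⟨a, ha, hai⟩ := hsurj i
      exact Finset.mem_image.mpr ⟨a, ha, hai⟩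
    have hkS : k ≤ S.card := by
      have := Finset.card_image_le (f := col) (s := S)
      rw [himg] at this
      simpa using this
    have hinj : Set.InjOn col ↑S := by
      apply Finset.injOn_of_card_image_eq
      rw [himg]
      simp only [Finset.card_univ, Fintype.card_fin]
      omega
    choose g hgS hgc using hsurj
    have huniq : ∀ a ∈ S, a = g (col a) := by
      intro a ha
      exact hinj (Finset.mem_coe.mpr ha) (Finset.mem_coe.mpr (hgS (col a))) (by rw [hgc])
    have hmemS : ∀ a : α, vClause (k := k) a ∈ φ' → a ∈ S := by
      intro a ha; rw [hS, Finset.mem_filter]; exact ⟨Finset.mem_univ _, ha⟩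
    refine ⟨g, hgc, ?_⟩
    have main : ∀ i j : Fin k, i < j → G.Adj (g i) (g j) := by
      intro i j h
      have h1 : u i j h = g i := by
        have := huniq (u i j h) (hmemS _ (hVu _ _ _))
        rwa [hcu] at this
      have h2 : v i j h = g j := by
        have := huniq (v i j h) (hmemS _ (hVv _ _ _))
        rwa [hcv] at this
      rw [← h1, ← h2]; exact hadj i j h
    intro i j hij
    rcases lt_trichotomy i j with h | h | h
    · exact main i j h
    · exact absurd h hij
    · exact (main j i h).symm
end

section
/- Let φ be a definite Horn formula without unit clauses in which every clause has at most three literals, let k ≥ 1 be an integer, let s, t ∈ Var(φ) with s ≠ t, and suppose that every clause of φ containing the positive literal t has exactly three literals. Let ψ be the formula obtained from φ by deleting the literal t from every clause in which t occurs positively (and leaving all other clauses unchanged). Then s is a k-backbone of ψ — equivalently, there exists ψ' ⊆ ψ with at most k clauses such that ψ' ⊨ ¬s — if and only if there exists a hyperpath from s to t in φ consisting of at most k clauses. -/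
section Aux7

variable {V : Type*}

lemma satCNF_mono7 {τ : V → Bool} {ψ₁ ψ₂ : Finset (Finset (V × Bool))}
    (h : ψ₁ ⊆ ψ₂) (hτ : SatCNF τ ψ₂) : SatCNF τ ψ₁ := fun c hc => hτ c (h hc)

/-- Forward-chaining reachability (unit propagation from `s`) in a definite Horn program. -/
inductive Reach7 (φ' : Finset (Finset (V × Bool))) (s : V) : V → Prop
  | base : Reach7 φ' s s
  | step (c : Finset (V × Bool)) (u : V) : c ∈ φ' → (u, true) ∈ c →
      (∀ l ∈ c, l.2 = false → Reach7 φ' s l.1) → Reach7 φ' s u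

lemma reach7_mono {ψ₁ ψ₂ : Finset (Finset (V × Bool))} {s u : V}
    (hsub : ψ₁ ⊆ ψ₂) (h : Reach7 ψ₁ s u) : Reach7 ψ₂ s u := by
  induction h with
  | base => exact Reach7.base
  | step c u hc hu _ ih => exact Reach7.step c u (hsub hc) hu ih

variable [DecidableEq V]

lemma reach7_clause {ψ₂ : Finset (Finset (V × Bool))} {s u : V}
    (h : Reach7 ψ₂ s u) (hus : u ≠ s) :
    ∃ c ∈ ψ₂, (u, true) ∈ c ∧ ∀ l ∈ c, l.2 = false → Reach7 (ψ₂.erase c) s l.1 := by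
  by_contra hcon
  push_neg at hcon
  set F : Finset (Finset (V × Bool)) := ψ₂.filter (fun c => (u, true) ∉ c) with hF
  have hFsub : ∀ c ∈ ψ₂, (u, true) ∈ c → F ⊆ ψ₂.erase c := by
    intro c hc huc x hx
    rw [Finset.mem_filter] at hx
    refine Finset.mem_erase.2 ⟨?_, hx.1⟩
    rintro rfl; exact hx.2 huc
  have claim : ∀ v, Reach7 ψ₂ s v → Reach7 F s v := by
    intro v hv
    induction hv with
    | base => exact Reach7.base
    | step c v hc hv hbody ih =>
      by_cases h' : (u, true) ∈ c
      · obtain ⟨l, hl, hl2, hnr⟩ := hcon c hc h'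
        exact absurd (reach7_mono (hFsub c hc h') (ih l hl hl2)) hnr
      · exact Reach7.step c v (Finset.mem_filter.2 ⟨hc, h'⟩) hv ih
  have hu : Reach7 F s u := claim u h
  cases hu with
  | base => exact hus rfl
  | step c u hc hu _ => exact (Finset.mem_filter.1 hc).2 hu

lemma reach7_hyperpath {s : V} :
    ∀ (n : ℕ) (ψ₂ : Finset (Finset (V × Bool))), ψ₂.card ≤ n →
      (∀ c ∈ ψ₂, IsDefHornClause c) → ∀ u, Reach7 ψ₂ s u → IsHyperpath ψ₂ s u := by
  intro n
  induction n with
  | zero =>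
    intro ψ₂ hcard _ u h
    rcases eq_or_ne u s with rfl | hus
    · exact IsHyperpath.refl _ _
    · obtain ⟨c, hc, -, -⟩ := reach7_clause h hus
      have : ψ₂ = ∅ := Finset.card_eq_zero.1 (Nat.le_zero.1 hcard)
      simp [this] at hc
  | succ n ih =>
    intro ψ₂ hcard hdef u h
    rcases eq_or_ne u s with rfl | hus
    · exact IsHyperpath.refl _ _
    · obtain ⟨c, hc, hu, hbody⟩ := reach7_clause h hus
      have hpos : ∀ l ∈ c, l.2 = true → l = (u, true) := by
        have hd := hdef c hc
        rw [IsDefHornClause, Finset.card_eq_one] at hd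
        obtain ⟨a, ha⟩ := hd
        intro l hl hl2
        have h1 : l ∈ c.filter (fun l => l.2 = true) := Finset.mem_filter.2 ⟨hl, hl2⟩
        have h2 : (u, true) ∈ c.filter (fun l => l.2 = true) :=
          Finset.mem_filter.2 ⟨hu, rfl⟩
        rw [ha, Finset.mem_singleton] at h1 h2
        rw [h1, h2]
      refine IsHyperpath.step c hc hu hpos ?_
      intro l hl hl2
      have hcard' : (ψ₂.erase c).card ≤ n := by
        have := Finset.card_erase_of_mem hc
        omega
      exact ih (ψ₂.erase c) hcard'
        (fun c' hc' => hdef c' (Finset.mem_of_mem_erase hc')) l.1 (hbody l hl hl2)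

lemma hyperpath_entails7 {t : V} (τ : V → Bool) :
    ∀ {φ' : Finset (Finset (V × Bool))} {s u : V}, IsHyperpath φ' s u →
      s ≠ t → τ s = true → SatCNF τ (φ'.image (fun c => c.erase (t, true))) →
      u ≠ t ∧ τ u = true := by
  intro φ' s u h
  induction h with
  | refl φ' s => exact fun hst hs _ => ⟨hst, hs⟩
  | @step φ' s u c hc hu hpos hsub ih =>
    intro hst hs hτ
    have hτ' : SatCNF τ ((φ'.erase c).image (fun c => c.erase (t, true))) :=
      satCNF_mono7 (Finset.image_subset_image (Finset.erase_subset _ _)) hτ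
    obtain ⟨l, hl, hτl⟩ := hτ (c.erase (t, true)) (Finset.mem_image_of_mem _ hc)
    rw [Finset.mem_erase] at hl
    cases hl2 : l.2 with
    | false =>
      have := (ih l hl.2 hl2 hst hs hτ').2
      rw [hl2] at hτl
      rw [this] at hτl
      exact absurd hτl (by simp)
    | true =>
      have hlu := hpos l hl.2 hl2
      have hut : u ≠ t := by
        rintro rfl
        exact hl.1 hlu
      refine ⟨hut, ?_⟩
      rw [hlu] at hτl
      exact hτl

end Aux7
/-- Let `φ` be a definite Horn formula without unit clauses all of whose
clauses have at most three literals, let `k ≥ 1`, let `s ≠ t` be variables of `φ`, and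
suppose every clause of `φ` containing the positive literal `t` has exactly three
literals. Let `ψ` be obtained from `φ` by deleting the literal `t` from every clause in
which `t` occurs positively. Then `s` is a `k`-backbone of `ψ` — equivalently, some
`ψ' ⊆ ψ` with at most `k` clauses has `ψ' ⊨ ¬s` — iff there is a hyperpath from `s` to
`t` in `φ` consisting of at most `k` clauses. -/
theorem stmt7 {V : Type*} [DecidableEq V] (φ : Finset (Finset (V × Bool)))
    (hok : ∀ c ∈ φ, ClauseOk c) (hdh : ∀ c ∈ φ, IsDefHornClause c)
    (hnu : ∀ c ∈ φ, c.card ≠ 1) (h3 : ∀ c ∈ φ, c.card ≤ 3)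
    (k : ℕ) (hk : 1 ≤ k) (s t : V) (hs : s ∈ cnfVars φ) (ht : t ∈ cnfVars φ) (hst : s ≠ t)
    (ht3 : ∀ c ∈ φ, (t, true) ∈ c → c.card = 3) :
    (KBackbone (φ.image (fun c => c.erase (t, true))) k s ↔
        ∃ φ' ⊆ φ, φ'.card ≤ k ∧ IsHyperpath φ' s t) ∧
      ((∃ ψ' ⊆ φ.image (fun c => c.erase (t, true)), ψ'.card ≤ k ∧
          EntailsLit ψ' (s, false)) ↔
        ∃ φ' ⊆ φ, φ'.card ≤ k ∧ IsHyperpath φ' s t) := by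
  classical
  -- Backward direction: a hyperpath yields an entailing subformula of the reduct.
  have backward : (∃ φ' ⊆ φ, φ'.card ≤ k ∧ IsHyperpath φ' s t) →
      ∃ ψ' ⊆ φ.image (fun c => c.erase (t, true)), ψ'.card ≤ k ∧
        EntailsLit ψ' (s, false) := by
    rintro ⟨φ', hsub, hcard, hpath⟩
    refine ⟨φ'.image (fun c => c.erase (t, true)), Finset.image_subset_image hsub,
      Finset.card_image_le.trans hcard, ?_⟩
    intro τ hτ
    cases hτs : τ s with
    | false => rfl
    | true => exact absurd rfl (hyperpath_entails7 τ hpath hst hτs hτ).1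
  -- Forward direction: an entailing subformula of the reduct yields a hyperpath.
  have forward : ∀ ψ' ⊆ φ.image (fun c => c.erase (t, true)), ψ'.card ≤ k →
      EntailsLit ψ' (s, false) → ∃ φ' ⊆ φ, φ'.card ≤ k ∧ IsHyperpath φ' s t := by
    intro ψ' hsubψ hcardψ hent
    have hg : ∀ c' : {x // x ∈ ψ'}, ∃ c ∈ φ, c.erase (t, true) = c'.1 := by
      intro c'
      obtain ⟨c, hc, hc'⟩ := Finset.mem_image.1 (hsubψ c'.2)
      exact ⟨c, hc, hc'⟩
    choose g hg1 hg2 using hg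
    set φ' : Finset (Finset (V × Bool)) := ψ'.attach.image g with hφ'
    have hφ'φ : φ' ⊆ φ := by
      intro x hx
      obtain ⟨c', -, rfl⟩ := Finset.mem_image.1 hx
      exact hg1 c'
    have hφ'card : φ'.card ≤ k := by
      refine le_trans Finset.card_image_le ?_
      rw [Finset.card_attach]; exact hcardψ
    set τ : V → Bool := fun v => if Reach7 φ' s v then true else false with hτdef
    have hτs : τ s = true := by
      simp only [hτdef]; rw [if_pos Reach7.base]
    have htreach : Reach7 φ' s t := by
      by_contra hnt
      have hsat : SatCNF τ ψ' := by
        intro c' hc'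
        have hgc : g ⟨c', hc'⟩ ∈ φ' :=
          Finset.mem_image.2 ⟨⟨c', hc'⟩, Finset.mem_attach _ _, rfl⟩
        set c : Finset (V × Bool) := g ⟨c', hc'⟩ with hcdef
        have hce : c.erase (t, true) = c' := hg2 ⟨c', hc'⟩
        by_cases hb : ∀ l ∈ c, l.2 = false → Reach7 φ' s l.1
        · -- all bodies reachable, so the head is reachable
          have hd := hdh c (hφ'φ hgc)
          rw [IsDefHornClause, Finset.card_eq_one] at hd
          obtain ⟨a, ha⟩ := hd
          have haf : a ∈ c.filter (fun l => l.2 = true) := by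
            rw [ha]; exact Finset.mem_singleton_self a
          rw [Finset.mem_filter] at haf
          have haeq : a = (a.1, true) := by
            obtain ⟨a1, a2⟩ := a
            simpa using haf.2
          have hreach : Reach7 φ' s a.1 :=
            Reach7.step c a.1 hgc (haeq ▸ haf.1) hb
          have hat : a.1 ≠ t := by
            rintro rfl; exact hnt hreach
          refine ⟨(a.1, true), ?_, ?_⟩
          · rw [← hce]
            exact Finset.mem_erase.2 ⟨by simp [hat], haeq ▸ haf.1⟩
          · simp only [hτdef]; rw [if_pos hreach]
        · push_neg at hb
          obtain ⟨l, hl, hl2, hnr⟩ := hb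
          refine ⟨l, ?_, ?_⟩
          · rw [← hce]
            refine Finset.mem_erase.2 ⟨?_, hl⟩
            rintro rfl
            simp at hl2
          · rw [hl2]
            simp only [hτdef]; rw [if_neg hnr]
      have := hent τ hsat
      rw [hτs] at this
      exact absurd this (by simp)
    exact ⟨φ', hφ'φ, hφ'card,
      reach7_hyperpath φ'.card φ' le_rfl (fun c hc => hdh c (hφ'φ hc)) t htreach⟩
  -- Entailment of the positive literal `s` from a subset of the reduct is impossible.
  have nopos : ∀ ψ' ⊆ φ.image (fun c => c.erase (t, true)),
      ¬ EntailsLit ψ' (s, true) := by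
    intro ψ' hsubψ hent
    have hsat : SatCNF (fun _ => false) ψ' := by
      intro c' hc'
      obtain ⟨c, hc, rfl⟩ := Finset.mem_image.1 (hsubψ hc')
      have hd := hdh c hc
      rw [IsDefHornClause] at hd
      have hneg : ∃ l ∈ c, l.2 = false := by
        by_contra hno
        push_neg at hno
        have hall : ∀ l ∈ c, l.2 = true := by
          intro l hl
          cases h2 : l.2 with
          | false => exact absurd h2 (hno l hl)
          | true => rfl
        rw [Finset.filter_true_of_mem hall] at hd
        exact hnu c hc hd
      obtain ⟨l, hl, hl2⟩ := hneg
      refine ⟨l, Finset.mem_erase.2 ⟨?_, hl⟩, hl2.symm⟩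
      rintro rfl
      simp at hl2
    have := hent (fun _ => false) hsat
    exact absurd this (by simp)
  refine ⟨⟨?_, ?_⟩, ⟨?_, ?_⟩⟩
  · rintro ⟨ψ', hsubψ, hcardψ, hent | hent⟩
    · exact absurd hent (nopos ψ' hsubψ)
    · exact forward ψ' hsubψ hcardψ hent
  · intro h
    obtain ⟨ψ', h1, h2, h3⟩ := backward h
    exact ⟨ψ', h1, h2, Or.inr h3⟩
  · rintro ⟨ψ', h1, h2, h3⟩
    exact forward ψ' h1 h2 h3
  · exact backward
end

section
/- Let φ be a definite Horn formula, let k ≥ 1 be an integer, and let x ∈ Var(φ). Then x is an iterative k-backbone of φ if and only if φ ⊨ x. -/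
section Aux
variable {V : Type*}

lemma satCNF_mono {ψ φ : Finset (Finset (V × Bool))} (h : ψ ⊆ φ) {τ : V → Bool} :
    SatCNF τ φ → SatCNF τ ψ := fun hs c hc => hs c (h hc)

lemma allTrue_sat {φ : Finset (Finset (V × Bool))} (hdh : ∀ c ∈ φ, IsDefHornClause c) :
    SatCNF (fun _ => true) φ := by
  intro c hc
  obtain ⟨l, hl⟩ := Finset.card_eq_one.mp (hdh c hc)
  have hm : l ∈ c.filter (fun l => l.2 = true) := by rw [hl]; exact Finset.mem_singleton_self l
  rw [Finset.mem_filter] at hm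
  exact ⟨l, hm.1, hm.2.symm⟩

variable [DecidableEq V]

lemma filter_erase_neg {c : Finset (V × Bool)} {y : V} :
    ((c.erase (y, false)).filter (fun l => l.2 = true)) = c.filter (fun l => l.2 = true) := by
  ext m
  simp only [Finset.mem_filter, Finset.mem_erase]
  constructor
  · rintro ⟨⟨_, hm⟩, h2⟩; exact ⟨hm, h2⟩
  · rintro ⟨hm, h2⟩
    refine ⟨⟨?_, hm⟩, h2⟩
    rintro rfl; simp at h2

lemma reduct_mem {φ : Finset (Finset (V × Bool))} {y : V} {c' : Finset (V × Bool)}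
    (hc' : c' ∈ Reduct φ (y, true)) :
    ∃ c ∈ φ, (y, true) ∉ c ∧ c' = c.erase (y, false) := by
  simp only [Reduct, Finset.mem_image, Finset.mem_filter, LitCompl] at hc'
  obtain ⟨c, ⟨hc, hni⟩, rfl⟩ := hc'
  exact ⟨c, hc, hni, rfl⟩

lemma reduct_ok {φ : Finset (Finset (V × Bool))} {y : V}
    (hok : ∀ c ∈ φ, ClauseOk c) : ∀ c' ∈ Reduct φ (y, true), ClauseOk c' := by
  intro c' hc'
  obtain ⟨c, hc, _, rfl⟩ := reduct_mem hc'
  intro z hz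
  exact hok c hc z ⟨Finset.mem_of_mem_erase hz.1, Finset.mem_of_mem_erase hz.2⟩

lemma reduct_dh {φ : Finset (Finset (V × Bool))} {y : V}
    (hdh : ∀ c ∈ φ, IsDefHornClause c) : ∀ c' ∈ Reduct φ (y, true), IsDefHornClause c' := by
  intro c' hc'
  obtain ⟨c, hc, _, rfl⟩ := reduct_mem hc'
  unfold IsDefHornClause
  rw [filter_erase_neg]
  exact hdh c hc

lemma sat_reduct {φ : Finset (Finset (V × Bool))} {y : V} {τ : V → Bool}
    (hτ : SatCNF τ φ) (hy : τ y = true) : SatCNF τ (Reduct φ (y, true)) := by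
  intro c' hc'
  obtain ⟨c, hc, _, rfl⟩ := reduct_mem hc'
  obtain ⟨l, hl, hτl⟩ := hτ c hc
  refine ⟨l, Finset.mem_erase.mpr ⟨?_, hl⟩, hτl⟩
  rintro rfl
  rw [hy] at hτl
  exact Bool.noConfusion hτl

lemma fwd {k : ℕ} {φ : Finset (Finset (V × Bool))} {x : V}
    (h : IterKBackbone k φ x) :
    (∀ c ∈ φ, ClauseOk c) → (∀ c ∈ φ, IsDefHornClause c) → EntailsLit φ (x, true) := by
  induction h with
  | base hb =>
    intro hok hdh
    obtain ⟨ψ, hsub, _, hent⟩ := hb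
    have hψ : ∀ c ∈ ψ, IsDefHornClause c := fun c hc => hdh c (hsub hc)
    cases hent with
    | inl h => exact fun τ hτ => h τ (satCNF_mono hsub hτ)
    | inr h =>
      have := h (fun _ => true) (allTrue_sat hψ)
      simp at this
  | step b hby hyb hred ih =>
    rename_i y
    intro hok hdh
    have hb : b = true := by
      have := hyb (fun _ => true) (allTrue_sat hdh)
      simpa using this.symm
    subst hb
    intro τ hτ
    have hy : τ y = true := hyb τ hτ
    exact ih (reduct_ok hok) (reduct_dh hdh) τ (sat_reduct hτ hy)

lemma bwd {k : ℕ} (hk : 1 ≤ k) :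
    ∀ n (φ : Finset (Finset (V × Bool))), φ.card = n →
      (∀ c ∈ φ, ClauseOk c) → (∀ c ∈ φ, IsDefHornClause c) →
      ∀ x : V, EntailsLit φ (x, true) → IterKBackbone k φ x := by
  intro n
  induction n using Nat.strong_induction_on with
  | _ n ih =>
  rintro φ rfl hok hdh x hx
  by_cases hu : ∃ y : V, ({(y, true)} : Finset (V × Bool)) ∈ φ
  · obtain ⟨y, hy⟩ := hu
    have hentY : EntailsLit φ (y, true) := by
      intro τ hτ
      obtain ⟨l, hl, h⟩ := hτ _ hy
      rw [Finset.mem_singleton] at hl; subst hl; exact h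
    have hkb : KBackbone φ k y := by
      refine ⟨{({(y, true)} : Finset (V × Bool))}, by simpa using hy, by simpa using hk,
        Or.inl ?_⟩
      intro τ hτ
      obtain ⟨l, hl, h⟩ := hτ _ (Finset.mem_singleton_self _)
      rw [Finset.mem_singleton] at hl; subst hl; exact h
    by_cases hxy : x = y
    · subst hxy; exact .base hkb
    · have hcard : (Reduct φ (y, true)).card < φ.card := by
        refine lt_of_le_of_lt (Finset.card_image_le) (Finset.card_lt_card ?_)
        rw [Finset.ssubset_iff_of_subset (Finset.filter_subset _ _)]
        exact ⟨{(y, true)}, hy, by simp⟩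
      have hredEnt : EntailsLit (Reduct φ (y, true)) (x, true) := by
        intro τ hτ
        have hτ'φ : SatCNF (fun v => if v = y then true else τ v) φ := by
          intro c hc
          by_cases h1 : (y, true) ∈ c
          · exact ⟨(y, true), h1, by simp⟩
          · have hc' : c.erase (LitCompl (y, true)) ∈ Reduct φ (y, true) :=
              Finset.mem_image_of_mem _ (Finset.mem_filter.mpr ⟨hc, h1⟩)
            have hc'' : c.erase (y, false) ∈ Reduct φ (y, true) := by
              simpa [LitCompl] using hc'
            obtain ⟨l, hl, hτl⟩ := hτ _ hc''
            have hlc : l ∈ c := Finset.mem_of_mem_erase hl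
            have hlne : l ≠ (y, false) := (Finset.mem_erase.mp hl).1
            refine ⟨l, hlc, ?_⟩
            by_cases hly : l.1 = y
            · have h2 : l.2 = true := by
                cases h2 : l.2
                · exact absurd (Prod.ext hly h2) hlne
                · rfl
              rw [h2]; simp [hly]
            · simpa [hly] using hτl
        have hxv := hx _ hτ'φ
        simpa [hxy] using hxv
      exact .step true hkb hentY
        (ih _ hcard _ rfl (reduct_ok hok) (reduct_dh hdh) x hredEnt)
  · exfalso
    push_neg at hu
    have hτ : SatCNF (fun _ => false) φ := by
      intro c hc
      by_cases hneg : ∃ l ∈ c, l.2 = false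
      · obtain ⟨l, hl, h2⟩ := hneg; exact ⟨l, hl, h2.symm⟩
      · exfalso
        push_neg at hneg
        have hfe : c.filter (fun l => l.2 = true) = c := by
          apply Finset.filter_eq_self.mpr
          intro l hl
          cases h : l.2
          · exact absurd h (hneg l hl)
          · rfl
        have h1 : c.card = 1 := by rw [← hfe]; exact hdh c hc
        obtain ⟨l, hl⟩ := Finset.card_eq_one.mp h1
        have hl2 : l.2 = true := by
          have : l ∈ c := by rw [hl]; exact Finset.mem_singleton_self l
          cases h : l.2
          · exact absurd h (hneg l this)
          · rfl
        have : c = {(l.1, true)} := by rw [hl, ← hl2]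
        exact hu l.1 (this ▸ hc)
    have := hx _ hτ
    simp at this

end Aux

/-- For a definite Horn formula `φ`, `k ≥ 1` and `x ∈ Var(φ)`:
`x` is an iterative `k`-backbone of `φ` iff `φ ⊨ x`. -/
theorem stmt9 {V : Type*} [DecidableEq V] (φ : Finset (Finset (V × Bool)))
    (hok : ∀ c ∈ φ, ClauseOk c) (hdh : ∀ c ∈ φ, IsDefHornClause c)
    (k : ℕ) (hk : 1 ≤ k) (x : V) (hx : x ∈ cnfVars φ) :
    IterKBackbone k φ x ↔ EntailsLit φ (x, true) := by
  constructor
  · exact fun h => fwd h hok hdh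
  · exact fun h => bwd hk _ φ rfl hok hdh x h
end

section
/- For every CNF formula φ and every integer k ≥ 1: φ contains an unsatisfiable subset consisting of at most k clauses if and only if the formula φ* = {c ∈ φ : |c| < k}, consisting of the clauses of φ with fewer than k literals, contains an unsatisfiable subset consisting of at most k clauses. -/
section AuxProof

variable {V : Type*} [DecidableEq V]

private lemma mem_cnfVars' {φ : Finset (Finset (V × Bool))} {x : V} :
    x ∈ cnfVars φ ↔ ∃ c ∈ φ, ∃ l ∈ c, Prod.fst l = x := by
  simp [cnfVars, Finset.mem_sup, Finset.mem_image]

private lemma card_eq_card_image_fst {c : Finset (V × Bool)} (hc : ClauseOk c) :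
    c.card = (c.image Prod.fst).card := by
  rw [Finset.card_image_of_injOn]
  intro l hl l' hl' hfst
  rcases l with ⟨x, b⟩; rcases l' with ⟨x', b'⟩
  cases hfst
  cases b <;> cases b' <;> first
    | rfl
    | exact absurd ⟨by assumption, by assumption⟩ (hc x)

private lemma exists_minimal_unsat :
    ∀ ψ : Finset (Finset (V × Bool)), ¬ CNFSatisfiable ψ →
      ∃ ψ₀ ⊆ ψ, ¬ CNFSatisfiable ψ₀ ∧ ∀ χ ⊂ ψ₀, CNFSatisfiable χ := by
  intro ψ
  induction ψ using Finset.strongInduction with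
  | _ ψ ih =>
    intro h
    by_cases hall : ∀ χ ⊂ ψ, CNFSatisfiable χ
    · exact ⟨ψ, le_refl _, h, hall⟩
    · push_neg at hall
      obtain ⟨χ, hχ, hχu⟩ := hall
      obtain ⟨ψ₀, h1, h2, h3⟩ := ih χ hχ hχu
      exact ⟨ψ₀, h1.trans hχ.subset, h2, h3⟩

private lemma tarsi (F : Finset (Finset (V × Bool))) (hunsat : ¬ CNFSatisfiable F)
    (hmin : ∀ χ ⊂ F, CNFSatisfiable χ) : (cnfVars F).card < F.card := by
  classical
  by_contra hcon
  push_neg at hcon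
  have hFne : F.Nonempty := by
    rcases F.eq_empty_or_nonempty with rfl | h
    · exact absurd ⟨fun _ => true, fun c hc => absurd hc (Finset.notMem_empty c)⟩ hunsat
    · exact h
  set d : Finset (Finset (V × Bool)) → ℤ := fun G => (G.card : ℤ) - (cnfVars G).card with hd
  set S : Finset (Finset (Finset (V × Bool))) := F.powerset.filter (· ≠ F) with hS
  have hSne : S.Nonempty := ⟨∅, by
    simp only [hS, Finset.mem_filter, Finset.mem_powerset]
    exact ⟨Finset.empty_subset _, fun h => hFne.ne_empty h.symm⟩⟩
  obtain ⟨G, hGS, hGmax⟩ := S.exists_max_image d hSne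
  rw [hS, Finset.mem_filter, Finset.mem_powerset] at hGS
  obtain ⟨hGsub, hGne⟩ := hGS
  have hdF : d F ≤ d G := by
    have h0 : d ∅ ≤ d G := by
      apply hGmax
      simp only [hS, Finset.mem_filter, Finset.mem_powerset]
      exact ⟨Finset.empty_subset _, fun h => hFne.ne_empty h.symm⟩
    have : d ∅ = 0 := by simp [hd, cnfVars]
    have hF0 : d F ≤ 0 := by
      simp only [hd]
      omega
    omega
  set H : Finset (Finset (V × Bool)) := F \ G with hH
  set t : Finset (V × Bool) → Finset V := fun c => c.image Prod.fst \ cnfVars G with ht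
  have hall : ∀ s : Finset {c // c ∈ H}, s.card ≤ (s.biUnion (fun c => t c.1)).card := by
    intro s
    set s' : Finset (Finset (V × Bool)) := s.image (fun c => c.1) with hs'
    have hs'card : s'.card = s.card :=
      Finset.card_image_of_injective _ Subtype.val_injective
    have hs'H : s' ⊆ H := by
      intro c hc
      simp only [hs', Finset.mem_image] at hc
      obtain ⟨⟨c', hc'⟩, _, rfl⟩ := hc
      exact hc'
    have hdisj : Disjoint s' G := by
      apply Finset.disjoint_left.2
      intro c hc hcG
      exact (Finset.mem_sdiff.1 (hs'H hc)).2 hcG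
    set U : Finset (Finset (V × Bool)) := s' ∪ G with hU
    have hUsub : U ⊆ F :=
      Finset.union_subset (hs'H.trans (Finset.sdiff_subset)) hGsub
    have hdU : d U ≤ d G := by
      by_cases hUF : U = F
      · rw [hUF]; exact hdF
      · apply hGmax
        simp only [hS, Finset.mem_filter, Finset.mem_powerset]
        exact ⟨hUsub, hUF⟩
    have hvarmono : cnfVars G ⊆ cnfVars U := by
      intro x hx
      obtain ⟨c, hcG, l, hl, hlx⟩ := mem_cnfVars'.1 hx
      exact mem_cnfVars'.2 ⟨c, Finset.mem_union_right _ hcG, l, hl, hlx⟩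
    have hcardU : U.card = s'.card + G.card := Finset.card_union_of_disjoint hdisj
    have h1 : (s'.card : ℤ) ≤ ((cnfVars U).card : ℤ) - (cnfVars G).card := by
      simp only [hd] at hdU
      omega
    have h2 : ((cnfVars U) \ (cnfVars G)).card = (cnfVars U).card - (cnfVars G).card :=
      Finset.card_sdiff_of_subset hvarmono
    have h3 : (cnfVars U) \ cnfVars G ⊆ s.biUnion (fun c => t c.1) := by
      intro x hx
      rw [Finset.mem_sdiff] at hx
      obtain ⟨hxU, hxG⟩ := hx
      obtain ⟨c, hcU, l, hlc, hlx⟩ := mem_cnfVars'.1 hxU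
      rw [hU, Finset.mem_union] at hcU
      rcases hcU with hcs' | hcG
      · simp only [hs', Finset.mem_image] at hcs'
        obtain ⟨cc, hccs, rfl⟩ := hcs'
        rw [Finset.mem_biUnion]
        refine ⟨cc, hccs, ?_⟩
        rw [ht, Finset.mem_sdiff]
        exact ⟨Finset.mem_image.2 ⟨l, hlc, hlx⟩, hxG⟩
      · exact absurd (mem_cnfVars'.2 ⟨c, hcG, l, hlc, hlx⟩) hxG
    have h4 : s.card ≤ ((cnfVars U) \ (cnfVars G)).card := by
      have hcardvar : (cnfVars G).card ≤ (cnfVars U).card := Finset.card_le_card hvarmono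
      omega
    exact h4.trans (Finset.card_le_card h3)
  obtain ⟨f, hfinj, hft⟩ := (Finset.all_card_le_biUnion_card_iff_exists_injective
    (fun c : {c // c ∈ H} => t c.1)).1 hall
  have hGss : G ⊂ F := HasSubset.Subset.ssubset_of_ne hGsub hGne
  obtain ⟨τ, hτ⟩ := hmin G hGss
  have hftvar : ∀ c : {c // c ∈ H}, f c ∉ cnfVars G := by
    intro c
    have := hft c
    rw [ht, Finset.mem_sdiff] at this
    exact this.2
  have hb : ∀ c : {c // c ∈ H}, ∃ b, (f c, b) ∈ c.1 := by
    intro c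
    have := hft c
    rw [ht, Finset.mem_sdiff, Finset.mem_image] at this
    obtain ⟨⟨l, hl, hlf⟩, -⟩ := this
    exact ⟨l.2, by rw [← hlf]; exact hl⟩
  choose g hg using hb
  set τ' : V → Bool := fun v =>
    if h : ∃ c : {c // c ∈ H}, f c = v then g h.choose else τ v with hτ'
  have hτ'f : ∀ c : {c // c ∈ H}, τ' (f c) = g c := by
    intro c
    have hex : ∃ c' : {c // c ∈ H}, f c' = f c := ⟨c, rfl⟩
    simp only [hτ', dif_pos hex]
    have := hex.choose_spec
    rw [hfinj this]
  have hτ'G : ∀ v, v ∈ cnfVars G → τ' v = τ v := by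
    intro v hv
    have hnex : ¬ ∃ c : {c // c ∈ H}, f c = v := by
      rintro ⟨c, rfl⟩
      exact hftvar c hv
    simp only [hτ', dif_neg hnex]
  apply hunsat
  refine ⟨τ', fun c hc => ?_⟩
  by_cases hcG : c ∈ G
  · obtain ⟨l, hl, hlv⟩ := hτ c hcG
    refine ⟨l, hl, ?_⟩
    rw [hτ'G l.1 (mem_cnfVars'.2 ⟨c, hcG, l, hl, rfl⟩)]
    exact hlv
  · have hcH : c ∈ H := Finset.mem_sdiff.2 ⟨hc, hcG⟩
    exact ⟨(f ⟨c, hcH⟩, g ⟨c, hcH⟩), hg ⟨c, hcH⟩, hτ'f ⟨c, hcH⟩⟩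

end AuxProof

/-- For every CNF formula `φ` and `k ≥ 1`: `φ` has an unsatisfiable
subset of at most `k` clauses iff `φ* = {c ∈ φ : |c| < k}` has an unsatisfiable subset
of at most `k` clauses. -/
theorem stmt13 {V : Type*} [DecidableEq V] (φ : Finset (Finset (V × Bool)))
    (hok : ∀ c ∈ φ, ClauseOk c) (k : ℕ) (hk : 1 ≤ k) :
    (∃ ψ ⊆ φ, ψ.card ≤ k ∧ ¬ CNFSatisfiable ψ) ↔
      ∃ ψ ⊆ φ.filter (fun c => c.card < k), ψ.card ≤ k ∧ ¬ CNFSatisfiable ψ := by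
  constructor
  · rintro ⟨ψ, hψφ, hψk, hψu⟩
    obtain ⟨ψ₀, h0ψ, h0u, h0min⟩ := exists_minimal_unsat ψ hψu
    refine ⟨ψ₀, ?_, (Finset.card_le_card h0ψ).trans hψk, h0u⟩
    intro c hc
    have hcφ : c ∈ φ := hψφ (h0ψ hc)
    rw [Finset.mem_filter]
    refine ⟨hcφ, ?_⟩
    have h1 : c.card = (c.image Prod.fst).card := card_eq_card_image_fst (hok c hcφ)
    have h2 : c.image Prod.fst ⊆ cnfVars ψ₀ := by
      intro x hx
      obtain ⟨l, hl, hlx⟩ := Finset.mem_image.1 hx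
      exact mem_cnfVars'.2 ⟨c, hc, l, hl, hlx⟩
    have h3 := tarsi ψ₀ h0u h0min
    calc c.card = (c.image Prod.fst).card := h1
      _ ≤ (cnfVars ψ₀).card := Finset.card_le_card h2
      _ < ψ₀.card := h3
      _ ≤ ψ.card := Finset.card_le_card h0ψ
      _ ≤ k := hψk
  · rintro ⟨ψ, hψ, hk', hu⟩
    exact ⟨ψ, hψ.trans (Finset.filter_subset _ _), hk', hu⟩
end
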